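/- arXiv:1511.04069 — 2 statements merged into one kernel-verified Lean document; each statement's English description precedes it below -/
import Mathlib

section
/- Let (M,d) be a metric space and T : M → M a surjective uniformly asymptotically regular mapping. Then T is the identity on M. -/
open Function Set Filter Topology

/-! A surjection `T` maps onto every point, so `T^[n]` does too; hence the `n`-th UAR supremum
`⨆ x, edist (T^[n+1] x) (T^[n] x)` is the supremum of the displacement `edist (T y) y` over
`y = T^[n] x`, i.e. over all of `M`. The UAR sequence is therefore constant, its limit `0` is the
supremal displacement, and `T` moves no point. -/

theorem Function.Surjective.iSup_edist_iterate_succ {M : Type*} [PseudoEMetricSpace M]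
    {T : M → M} (hT : Surjective T) (n : ℕ) :
    ⨆ x : M, edist (T^[n + 1] x) (T^[n] x) = ⨆ y : M, edist (T y) y := by
  simpa only [comp_apply, iterate_succ_apply'] using
    (hT.iterate n).iSup_comp (fun y => edist (T y) y)

theorem eq_id_of_iSup_edist_eq_zero {M : Type*} [EMetricSpace M] {T : M → M}
    (h : ⨆ y : M, edist (T y) y = 0) : T = id :=
  funext fun x => edist_eq_zero.mp (ENNReal.iSup_eq_zero.mp h x)

/-- A surjective uniformly asymptotically regular mapping on a metric space
is the identity. -/
theorem stmt1 {M : Type*} [MetricSpace M] (T : M → M)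
    (hsurj : Function.Surjective T)
    (hUAR : Tendsto (fun n : ℕ => ⨆ x : M, edist (T^[n + 1] x) (T^[n] x))
      atTop (𝓝 0)) :
    T = id := by
  simp only [hsurj.iSup_edist_iterate_succ, tendsto_const_nhds_iff] at hUAR
  exact eq_id_of_iSup_edist_eq_zero hUAR
end

section
/- For T = (1/2)(I + S) with S : C → C affine on a convex set C, one has the expansion T^n = Σ_{k=0}^n C(n,k) 2^{−n} S^k, and consequently ‖T^n x − T^{n+1} x‖ ≤ a_n · diam C for all x ∈ C, where a_n = 2^{−(n+1)} C(n, ⌊(n+1)/2⌋). -/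
/-!
Because `S` is affine on `C` and `T = (I + S)/2` maps `C` into itself,
`S^k (T x) = (S^k x + S^(k+1) x)/2`, and Pascal's rule turns this into the binomial expansion
of `T^n`. Subtracting two consecutive expansions gives
`2^(n+1) (T^n x - T^(n+1) x) = ∑ k, (C(n,k) - C(n,k-1)) S^k x`: the coefficients are the
increments of the unimodal sequence `k ↦ C(n,k-1)`, which vanishes at both ends. Its positive and
negative parts therefore both have mass `C(n, ⌊(n+1)/2⌋)` (the peak value), so each part is that
mass times a centre of mass lying in `C`, and two points of `C` are at most `diam C` apart.
-/

open Function Set Filter Topology Finset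

def AffineOn {E : Type*} [AddCommGroup E] [Module ℝ E] (S : E → E) (C : Set E) : Prop :=
  ∀ x ∈ C, ∀ y ∈ C, ∀ lam ∈ Icc (0 : ℝ) 1, S (lam • x + (1 - lam) • y) = lam • S x + (1 - lam) • S y

section Binomial

variable {R M : Type*} [Semiring R] [AddCommMonoid M] [Module R M]

theorem sum_range_add_two_choose_smul (v : ℕ → M) (n : ℕ) :
    ∑ k ∈ range (n + 2), (n.choose k : R) • v k = ∑ k ∈ range (n + 1), (n.choose k : R) • v k := by
  simp [sum_range_succ _ (n + 1), Nat.choose_succ_self]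

theorem sum_range_choose_smul_add_succ (v : ℕ → M) (n : ℕ) :
    ∑ k ∈ range (n + 1), (n.choose k : R) • (v k + v (k + 1)) =
      ∑ k ∈ range (n + 2), ((n + 1).choose k : R) • v k := by
  rw [sum_range_succ' _ (n + 1)]
  simp only [smul_add, sum_add_distrib, Nat.choose_succ_succ, Nat.cast_add, add_smul]
  rw [← sum_range_add_two_choose_smul, sum_range_succ' (fun k => (n.choose k : R) • v k),
    Nat.choose_zero_right, Nat.choose_zero_right]
  abel

end Binomial

theorem Nat.choose_le_choose_succ {n k : ℕ} (h : 2 * k + 1 ≤ n) :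
    n.choose k ≤ n.choose (k + 1) := by
  refine Nat.le_of_mul_le_mul_right ?_ k.succ_pos
  rw [Nat.choose_succ_right_eq]
  exact Nat.mul_le_mul_left _ (by omega)

theorem Nat.choose_succ_le_choose {n k : ℕ} (h : n ≤ 2 * k + 1) :
    n.choose (k + 1) ≤ n.choose k := by
  refine Nat.le_of_mul_le_mul_right ?_ k.succ_pos
  rw [Nat.choose_succ_right_eq]
  exact Nat.mul_le_mul_left _ (by omega)

def shiftedChoose (n : ℕ) : ℕ → ℝ
  | 0 => 0
  | k + 1 => n.choose k

theorem shiftedChoose_succ_sub (n k : ℕ) :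
    shiftedChoose n (k + 1) - shiftedChoose n k = 2 * n.choose k - (n + 1).choose k := by
  cases k with
  | zero => norm_num [shiftedChoose]
  | succ k =>
    simp only [shiftedChoose, Nat.choose_succ_succ, Nat.cast_add]
    ring

theorem shiftedChoose_le_succ {n k : ℕ} (h : k ≤ (n + 1) / 2) :
    shiftedChoose n k ≤ shiftedChoose n (k + 1) := by
  cases k with
  | zero => simp [shiftedChoose]
  | succ k => exact Nat.cast_le.2 (Nat.choose_le_choose_succ (by omega))

theorem shiftedChoose_succ_le {n k : ℕ} (h : (n + 1) / 2 < k) :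
    shiftedChoose n (k + 1) ≤ shiftedChoose n k := by
  obtain ⟨k, rfl⟩ : ∃ j, k = j + 1 := ⟨k - 1, by omega⟩
  exact Nat.cast_le.2 (Nat.choose_succ_le_choose (by omega))

section Normed

variable {E : Type*} [NormedAddCommGroup E] [NormedSpace ℝ E] {C : Set E}

theorem norm_sum_smul_sub_sum_smul_le {ι κ : Type*} (hC : Convex ℝ C)
    (hCb : Bornology.IsBounded C) {s : Finset ι} {t : Finset κ} {a : ι → ℝ} {b : κ → ℝ}
    {u : ι → E} {w : κ → E} (ha : ∀ i ∈ s, 0 ≤ a i) (hb : ∀ j ∈ t, 0 ≤ b j)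
    (hab : ∑ i ∈ s, a i = ∑ j ∈ t, b j) (hu : ∀ i ∈ s, u i ∈ C) (hw : ∀ j ∈ t, w j ∈ C) :
    ‖∑ i ∈ s, a i • u i - ∑ j ∈ t, b j • w j‖ ≤ (∑ i ∈ s, a i) * Metric.diam C := by
  rcases (sum_nonneg ha).eq_or_lt with hm | hm
  · have ha0 := (sum_eq_zero_iff_of_nonneg ha).1 hm.symm
    have hb0 := (sum_eq_zero_iff_of_nonneg hb).1 (hab ▸ hm.symm)
    rw [← hm, sum_eq_zero fun i hi => by rw [ha0 i hi, zero_smul],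
      sum_eq_zero fun j hj => by rw [hb0 j hj, zero_smul]]
    simp
  · have hy : ∑ i ∈ s, a i • u i = (∑ i ∈ s, a i) • s.centerMass a u := by
      rw [centerMass, smul_inv_smul₀ hm.ne']
    have hz : ∑ j ∈ t, b j • w j = (∑ i ∈ s, a i) • t.centerMass b w := by
      rw [centerMass, hab, smul_inv_smul₀ (hab ▸ hm).ne']
    rw [hy, hz, ← smul_sub, norm_smul, Real.norm_of_nonneg hm.le, ← dist_eq_norm]
    exact mul_le_mul_of_nonneg_left (Metric.dist_le_diam_of_mem hCb
      (hC.centerMass_mem ha hm hu) (hC.centerMass_mem hb (hab ▸ hm) hw)) hm.le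

theorem norm_sum_sub_smul_le_of_unimodal (hC : Convex ℝ C) (hCb : Bornology.IsBounded C)
    {g : ℕ → ℝ} {v : ℕ → E} {P N : ℕ} (hPN : P ≤ N) (h0 : g 0 = 0) (hN : g N = 0)
    (hup : ∀ k < P, g k ≤ g (k + 1)) (hdown : ∀ k, P ≤ k → k < N → g (k + 1) ≤ g k)
    (hv : ∀ k < N, v k ∈ C) :
    ‖∑ k ∈ range N, (g (k + 1) - g k) • v k‖ ≤ g P * Metric.diam C := by
  have hsplit : ∑ k ∈ range N, (g (k + 1) - g k) • v k =
      ∑ k ∈ range P, (g (k + 1) - g k) • v k - ∑ k ∈ Ico P N, (g k - g (k + 1)) • v k := by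
    rw [← sum_range_add_sum_Ico _ hPN, sub_eq_add_neg, ← sum_neg_distrib]
    congr 1
    exact sum_congr rfl fun k _ => by rw [← neg_smul, neg_sub]
  have hmass : g P = ∑ k ∈ range P, (g (k + 1) - g k) := by
    rw [sum_range_sub, h0, sub_zero]
  rw [hsplit, hmass]
  refine norm_sum_smul_sub_sum_smul_le hC hCb
    (fun k hk => sub_nonneg.2 (hup k (mem_range.1 hk)))
    (fun k hk => sub_nonneg.2 (hdown k (mem_Ico.1 hk).1 (mem_Ico.1 hk).2)) ?_
    (fun k hk => hv k ((mem_range.1 hk).trans_le hPN)) (fun k hk => hv k (mem_Ico.1 hk).2)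
  simp only [← hmass, ← neg_sub (g (_ + 1)), sum_neg_distrib, sum_Ico_sub g hPN, hN]
  ring

end Normed

section Affine

variable {E : Type*} [AddCommGroup E] [Module ℝ E] {C : Set E} {S T : E → E}

theorem AffineOn.iterate (h : AffineOn S C) (hS : MapsTo S C C) : ∀ k, AffineOn S^[k] C
  | 0 => fun _ _ _ _ _ _ => rfl
  | k + 1 => fun x hx y hy lam hlam => by
    rw [iterate_succ_apply', iterate_succ_apply', iterate_succ_apply',
      h.iterate hS k x hx y hy lam hlam]
    exact h _ (hS.iterate k hx) _ (hS.iterate k hy) lam hlam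

theorem AffineOn.iterate_half_smul_add (h : AffineOn S C) (hS : MapsTo S C C) {x : E}
    (hx : x ∈ C) (k : ℕ) :
    S^[k] ((1 / 2 : ℝ) • (x + S x)) = (1 / 2 : ℝ) • (S^[k] x + S^[k + 1] x) := by
  have key := h.iterate hS k x hx (S x) (hS hx) (1 / 2) (by norm_num)
  norm_num only at key
  rw [smul_add, smul_add, key, iterate_succ_apply]

theorem iterate_eq_inv_two_pow_smul_sum (hC : Convex ℝ C) (hS : MapsTo S C C)
    (haff : AffineOn S C) (hT : ∀ x, T x = (1 / 2 : ℝ) • (x + S x)) (n : ℕ) {x : E}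
    (hx : x ∈ C) :
    T^[n] x = ((2 : ℝ) ^ n)⁻¹ • ∑ k ∈ range (n + 1), (n.choose k : ℝ) • S^[k] x := by
  induction n generalizing x with
  | zero => simp
  | succ n ih =>
    have hTx : T x ∈ C := by
      rw [hT, smul_add]
      exact hC hx (hS hx) (by norm_num) (by norm_num) (by norm_num)
    have hterm : ∀ k, (n.choose k : ℝ) • S^[k] (T x) =
        (1 / 2 : ℝ) • ((n.choose k : ℝ) • (S^[k] x + S^[k + 1] x)) := fun k => by
      rw [hT, haff.iterate_half_smul_add hS hx, smul_comm]
    rw [iterate_succ_apply, ih hTx, ← sum_range_choose_smul_add_succ]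
    simp only [hterm]
    rw [← smul_sum, smul_smul]
    congr 1
    rw [pow_succ]
    ring

theorem iterate_sub_iterate_succ_eq (hC : Convex ℝ C) (hS : MapsTo S C C)
    (haff : AffineOn S C) (hT : ∀ x, T x = (1 / 2 : ℝ) • (x + S x)) (n : ℕ) {x : E}
    (hx : x ∈ C) :
    T^[n] x - T^[n + 1] x = ((2 : ℝ) ^ (n + 1))⁻¹ •
      ∑ k ∈ range (n + 2), (shiftedChoose n (k + 1) - shiftedChoose n k) • S^[k] x := by
  have htwo : ((2 : ℝ) ^ n)⁻¹ = ((2 : ℝ) ^ (n + 1))⁻¹ * 2 := by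
    rw [pow_succ]; field_simp
  rw [iterate_eq_inv_two_pow_smul_sum hC hS haff hT n hx,
    iterate_eq_inv_two_pow_smul_sum hC hS haff hT (n + 1) hx, ← sum_range_add_two_choose_smul,
    htwo, mul_smul, ← smul_sub, smul_sum, ← sum_sub_distrib]
  congr 1
  refine sum_congr rfl fun k _ => ?_
  rw [smul_smul, ← sub_smul, shiftedChoose_succ_sub]

end Affine

theorem stmt14_general {E : Type*} [NormedAddCommGroup E] [NormedSpace ℝ E]
    (C : Set E) (hconv : Convex ℝ C)
    (hbd : Bornology.IsBounded C)
    (S : E → E) (hSC : Set.MapsTo S C C)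
    (haff : ∀ x ∈ C, ∀ y ∈ C, ∀ lam ∈ Set.Icc (0 : ℝ) 1,
      S (lam • x + (1 - lam) • y) = lam • S x + (1 - lam) • S y)
    (T : E → E) (hT : ∀ x, T x = (1 / 2 : ℝ) • (x + S x)) :
    (∀ n : ℕ, ∀ x ∈ C,
      T^[n] x = ∑ k ∈ Finset.range (n + 1),
        ((n.choose k : ℝ) / 2 ^ n) • S^[k] x) ∧
    (∀ n : ℕ, ∀ x ∈ C,
      ‖T^[n] x - T^[n + 1] x‖ ≤
        ((n.choose ((n + 1) / 2) : ℝ) / 2 ^ (n + 1)) * Metric.diam C) := by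
  refine ⟨fun n x hx => ?_, fun n x hx => ?_⟩
  · rw [iterate_eq_inv_two_pow_smul_sum hconv hSC haff hT n hx, smul_sum]
    simp only [smul_smul, div_eq_inv_mul]
  · rw [iterate_sub_iterate_succ_eq hconv hSC haff hT n hx, norm_smul,
      Real.norm_of_nonneg (by positivity), div_eq_inv_mul, mul_assoc]
    refine mul_le_mul_of_nonneg_left ?_ (by positivity)
    exact norm_sum_sub_smul_le_of_unimodal hconv hbd (P := (n + 1) / 2 + 1) (by omega) rfl
      (by simp [shiftedChoose, Nat.choose_succ_self])
      (fun _ hk => shiftedChoose_le_succ (by omega))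
      (fun _ hk _ => shiftedChoose_succ_le (by omega)) (fun k _ => hSC.iterate k hx)

/-- For `T = (1/2)(I + S)` with `S` affine on a convex bounded set `C`:
the binomial expansion `T^n = Σ_k C(n,k) 2^{-n} S^k` holds on `C`, and
`‖T^n x − T^{n+1} x‖ ≤ a_n · diam C` where
`a_n = 2^{-(n+1)} C(n, ⌊(n+1)/2⌋)`. -/
theorem stmt14 {E : Type*} [NormedAddCommGroup E] [NormedSpace ℝ E]
    [CompleteSpace E] (C : Set E) (hconv : Convex ℝ C)
    (hbd : Bornology.IsBounded C)
    (S : E → E) (hSC : Set.MapsTo S C C)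
    (haff : ∀ x ∈ C, ∀ y ∈ C, ∀ lam ∈ Set.Icc (0 : ℝ) 1,
      S (lam • x + (1 - lam) • y) = lam • S x + (1 - lam) • S y)
    (T : E → E) (hT : ∀ x, T x = (1 / 2 : ℝ) • (x + S x)) :
    (∀ n : ℕ, ∀ x ∈ C,
      T^[n] x = ∑ k ∈ Finset.range (n + 1),
        ((n.choose k : ℝ) / 2 ^ n) • S^[k] x) ∧
    (∀ n : ℕ, ∀ x ∈ C,
      ‖T^[n] x - T^[n + 1] x‖ ≤
        ((n.choose ((n + 1) / 2) : ℝ) / 2 ^ (n + 1)) * Metric.diam C) :=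
  stmt14_general C hconv hbd S hSC haff T hT
end
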